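/- (Γ-periodicity of the Berezin–Weil–Zak transform.) For every λ ∈ ℤ∖{0}, q ∈ ℤ, every Schwartz function h : ℝ → ℂ, every integer triple (a₀,b₀,c₀) ∈ ℤ³ and every (a,b,c) ∈ ℝ³, one has BWZ_{λ,q}(h)((a₀,b₀,c₀)·(a,b,c)) = BWZ_{λ,q}(h)(a,b,c), where · denotes the Heisenberg product; consequently BWZ_{λ,q}(h) descends to a function on the Heisenberg nilmanifold. -/
import Mathlib


open MeasureTheory Real Complex
open scoped ComplexConjugate

/-- The Heisenberg product on `ℝ³`: `(a,b,c)·(a',b',c') = (a+a', b+b', c+c'+ab')`. -/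
def heisMul (x y : ℝ × ℝ × ℝ) : ℝ × ℝ × ℝ :=
  (x.1 + y.1, x.2.1 + y.2.1, x.2.2 + y.2.2 + x.1 * y.2.1)

/-- The generalised Berezin–Weil–Zak transform
`BWZ_{λ,q}(h)(a,b,c) = (√|λ|/λ) ∑_{k∈ℤ} e^{-2πiqk/λ} e^{2πi(λc+kb)} h(k/λ + a)`. -/
noncomputable def BWZ (lam q : ℤ) (h : ℝ → ℂ) (x : ℝ × ℝ × ℝ) : ℂ :=
  ((Real.sqrt |(lam : ℝ)| : ℝ) / (lam : ℝ) : ℝ) *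
    ∑' k : ℤ, Complex.exp (-(2 * (π : ℂ) * Complex.I * (q : ℂ) * (k : ℂ)) / (lam : ℂ)) *
      Complex.exp (2 * (π : ℂ) * Complex.I * ((lam : ℂ) * (x.2.2 : ℂ) + (k : ℂ) * (x.2.1 : ℂ))) *
      h ((k : ℝ) / (lam : ℝ) + x.1)

/-- **Γ-periodicity of the Berezin–Weil–Zak transform**: `BWZ_{λ,q}(h)` is invariant under
left multiplication by integer points of the Heisenberg group. -/
theorem BWZ_gamma_periodic (lam : ℤ) (hlam : lam ≠ 0) (q : ℤ) (h : SchwartzMap ℝ ℂ)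
    (a₀ b₀ c₀ : ℤ) (a b c : ℝ) :
    BWZ lam q (⇑h) (heisMul ((a₀ : ℝ), (b₀ : ℝ), (c₀ : ℝ)) (a, b, c))
      = BWZ lam q (⇑h) (a, b, c) := by
  have hlamC : (lam:ℂ) ≠ 0 := Int.cast_ne_zero.2 hlam
  have hlamR : (lam:ℝ) ≠ 0 := Int.cast_ne_zero.2 hlam
  unfold BWZ heisMul
  congr 1
  conv_rhs => rw [← (Equiv.addRight (lam * a₀)).tsum_eq]
  refine tsum_congr fun k => ?_
  simp only [Equiv.coe_addRight]
  rw [← Complex.exp_add, ← Complex.exp_add]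
  have harg : ((k + lam * a₀ : ℤ) : ℝ) / (lam : ℝ) + a = (k : ℝ) / (lam : ℝ) + ((a₀ : ℝ) + a) := by
    push_cast; field_simp; ring
  rw [harg]
  congr 1
  rw [Complex.exp_eq_exp_iff_exists_int]
  exact ⟨q * a₀ + lam * c₀ + k * b₀, by push_cast; field_simp; ring⟩
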